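/- Deviation of ratios of Birkhoff sums: with μ_φ a normalized equilibrium state of dimension δ = h_f(μ_φ)/λ and Lyapunov exponent λ = ∫ τ dμ_φ where τ = log|f'|, for every ε > 0 there exist C, δ₀ > 0 such that μ_φ({x : |S_n τ(x)/n − λ| ≥ ε or |S_n φ(x)/S_n τ(x) + δ| ≥ ε}) ≤ C e^{−δ₀ n} for all n ≥ 1. -/
import Mathlib


open MeasureTheory

/-- The Birkhoff sum `S_n ψ = Σ_{k<n} ψ ∘ f^k`. -/
def birkhoff {X : Type*} (f : X → X) (ψ : X → ℝ) (n : ℕ) (x : X) : ℝ :=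
  ∑ k ∈ Finset.range n, ψ (f^[k] x)

/-- Deviation of ratios of Birkhoff sums: let `μ` be a normalized equilibrium state
satisfying the large deviation principle for continuous potentials, `τ = log|f'|` the
distortion with `S_n τ ≥ log c₀ + n log κ` uniformly (`κ > 1`), `λ = ∫ τ dμ` the Lyapunov
exponent and `δ` the dimension, so that `∫ (φ + δ τ) dμ = 0`. Then for every `ε > 0` there
are `C, δ₀ > 0` with
`μ{x : |S_n τ(x)/n − λ| ≥ ε or |S_n φ(x)/S_n τ(x) + δ| ≥ ε} ≤ C e^{−δ₀ n}` for all `n ≥ 1`. -/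
theorem stmt_13 {X : Type*} [MeasurableSpace X] [TopologicalSpace X]
    (μ : Measure X) [IsProbabilityMeasure μ] (f : X → X)
    (φ τ : X → ℝ) (hφcont : Continuous φ) (hτcont : Continuous τ)
    (c₀ κ : ℝ) (hc₀ : 0 < c₀) (hκ : 1 < κ)
    -- uniform hyperbolic lower bound for Birkhoff sums of the distortion
    (hτlow : ∀ x : X, ∀ n : ℕ, Real.log c₀ + n * Real.log κ ≤ birkhoff f τ n x)
    (δ : ℝ)
    -- `Φ = φ + δ τ` has zero mean (i.e. `δ = h/λ` is the dimension of `μ`)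
    (hΦ : ∫ x, (φ x + δ * τ x) ∂μ = 0)
    -- large deviation principle for Birkhoff sums of continuous potentials
    (hLD : ∀ ψ : X → ℝ, Continuous ψ → ∀ ε : ℝ, 0 < ε →
      ∃ C δ₀ : ℝ, 0 < C ∧ 0 < δ₀ ∧ ∀ n : ℕ, 1 ≤ n →
        μ {x : X | ε < |birkhoff f ψ n x / n - ∫ y, ψ y ∂μ|}
          ≤ ENNReal.ofReal (C * Real.exp (-δ₀ * n))) :
    ∀ ε : ℝ, 0 < ε → ∃ C δ₀ : ℝ, 0 < C ∧ 0 < δ₀ ∧ ∀ n : ℕ, 1 ≤ n →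
      μ {x : X | ε ≤ |birkhoff f τ n x / n - ∫ y, τ y ∂μ| ∨
          ε ≤ |birkhoff f φ n x / birkhoff f τ n x + δ|}
        ≤ ENNReal.ofReal (C * Real.exp (-δ₀ * n)) := by
  intro ε hε
  have hlogκ : 0 < Real.log κ := Real.log_pos hκ
  obtain ⟨C₁, δ₁, hC₁, hδ₁, h₁⟩ := hLD τ hτcont (ε / 2) (by positivity)
  have hΦcont : Continuous (fun x => φ x + δ * τ x) := by continuity
  obtain ⟨C₂, δ₂, hC₂, hδ₂, h₂⟩ :=
    hLD (fun x => φ x + δ * τ x) hΦcont (ε * Real.log κ / 4) (by positivity)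
  set δ₀ := min δ₁ δ₂ with hδ₀def
  have hδ₀ : 0 < δ₀ := lt_min hδ₁ hδ₂
  set n₀ : ℕ := ⌈(2 * |Real.log c₀|) / Real.log κ⌉₊ + 1 with hn₀def
  refine ⟨(C₁ + C₂) + Real.exp (δ₀ * n₀), δ₀, by positivity, hδ₀, ?_⟩
  intro n hn
  have hn1 : (1 : ℝ) ≤ (n : ℝ) := by exact_mod_cast hn
  by_cases hcase : n₀ ≤ n
  · -- main case: n large
    have hsub : {x : X | ε ≤ |birkhoff f τ n x / n - ∫ y, τ y ∂μ| ∨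
          ε ≤ |birkhoff f φ n x / birkhoff f τ n x + δ|} ⊆
        {x : X | ε / 2 < |birkhoff f τ n x / n - ∫ y, τ y ∂μ|} ∪
        {x : X | ε * Real.log κ / 4 <
          |birkhoff f (fun x => φ x + δ * τ x) n x / n - ∫ y, (φ y + δ * τ y) ∂μ|} := by
      intro x hx
      rcases hx with hx | hx
      · left; exact lt_of_lt_of_le (by linarith) hx
      · right
        have hn' : 2 * |Real.log c₀| / Real.log κ ≤ (n : ℝ) := by
          calc 2 * |Real.log c₀| / Real.log κ
              ≤ (⌈(2 * |Real.log c₀|) / Real.log κ⌉₊ : ℝ) := Nat.le_ceil _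
            _ ≤ (n : ℝ) := by
                exact_mod_cast le_trans (Nat.le_succ _) hcase
        have habs : |Real.log c₀| ≤ (n : ℝ) * Real.log κ / 2 := by
          rw [div_le_iff₀ hlogκ] at hn'; linarith
        have hT : (n : ℝ) * Real.log κ / 2 ≤ birkhoff f τ n x := by
          have := hτlow x n
          have := neg_abs_le (Real.log c₀)
          linarith
        have hTpos : 0 < birkhoff f τ n x := by nlinarith
        set T := birkhoff f τ n x
        set P := birkhoff f φ n x
        have hbk : birkhoff f (fun x => φ x + δ * τ x) n x = P + δ * T := by
          simp [birkhoff, Finset.sum_add_distrib, Finset.mul_sum, P, T]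
        have hratio : P / T + δ = (P + δ * T) / T := by field_simp
        have hεT : ε * T ≤ |P + δ * T| := by
          rw [hratio, abs_div, abs_of_pos hTpos, le_div_iff₀ hTpos] at hx
          linarith
        have hnpos : (0 : ℝ) < n := by linarith
        show ε * Real.log κ / 4 < |birkhoff f (fun x => φ x + δ * τ x) n x / ↑n -
            ∫ y, (φ y + δ * τ y) ∂μ|
        rw [hΦ, sub_zero, hbk, abs_div, abs_of_pos hnpos, lt_div_iff₀ hnpos]
        nlinarith
    calc μ _ ≤ μ ({x : X | ε / 2 < |birkhoff f τ n x / n - ∫ y, τ y ∂μ|} ∪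
          {x : X | ε * Real.log κ / 4 <
            |birkhoff f (fun x => φ x + δ * τ x) n x / n - ∫ y, (φ y + δ * τ y) ∂μ|}) :=
        measure_mono hsub
      _ ≤ μ {x : X | ε / 2 < |birkhoff f τ n x / n - ∫ y, τ y ∂μ|} +
          μ {x : X | ε * Real.log κ / 4 <
            |birkhoff f (fun x => φ x + δ * τ x) n x / n - ∫ y, (φ y + δ * τ y) ∂μ|} :=
        measure_union_le _ _
      _ ≤ ENNReal.ofReal (C₁ * Real.exp (-δ₁ * n)) +
          ENNReal.ofReal (C₂ * Real.exp (-δ₂ * n)) := add_le_add (h₁ n hn) (h₂ n hn)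
      _ ≤ ENNReal.ofReal ((C₁ + C₂ + Real.exp (δ₀ * n₀)) * Real.exp (-δ₀ * n)) := by
          rw [← ENNReal.ofReal_add (by positivity) (by positivity)]
          apply ENNReal.ofReal_le_ofReal
          have e₁ : Real.exp (-δ₁ * n) ≤ Real.exp (-δ₀ * n) := by
            apply Real.exp_le_exp.2
            have : δ₀ ≤ δ₁ := min_le_left _ _
            nlinarith
          have e₂ : Real.exp (-δ₂ * n) ≤ Real.exp (-δ₀ * n) := by
            apply Real.exp_le_exp.2
            have : δ₀ ≤ δ₂ := min_le_right _ _
            nlinarith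
          have hexp : 0 < Real.exp (δ₀ * n₀) := Real.exp_pos _
          have hexp2 : 0 < Real.exp (-δ₀ * n) := Real.exp_pos _
          nlinarith [mul_le_mul_of_nonneg_left e₁ hC₁.le,
            mul_le_mul_of_nonneg_left e₂ hC₂.le]
  · -- small case: n < n₀, bound measure by 1
    push_neg at hcase
    have hnn₀ : (n : ℝ) ≤ (n₀ : ℝ) := by exact_mod_cast hcase.le
    have h1 : (1 : ℝ) ≤ (C₁ + C₂ + Real.exp (δ₀ * n₀)) * Real.exp (-δ₀ * n) := by
      have : Real.exp (δ₀ * n₀) * Real.exp (-δ₀ * n) = Real.exp (δ₀ * n₀ - δ₀ * n) := by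
        rw [← Real.exp_add]; ring_nf
      have h2 : (1 : ℝ) ≤ Real.exp (δ₀ * n₀ - δ₀ * n) :=
        Real.one_le_exp (by nlinarith)
      have hexp2 : 0 < Real.exp (-δ₀ * n) := Real.exp_pos _
      nlinarith
    exact le_trans prob_le_one (ENNReal.one_le_ofReal.2 h1)
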